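/- arXiv:2011.15072 — 2 statements merged into one kernel-verified Lean document; each statement's English description precedes it below -/
import Mathlib

section
/- Assume in addition that every k ∈ H with k·k^# = 1 can be written as k = h·(h^#)⁻¹ for some h ∈ H. Then every H-orbit in Q contains a fixed point of κ, and consequently the natural map Q_ℝ/H_ℝ → Q/H is a bijection, where Q_ℝ := {q ∈ Q | κ(q) = q}. -/
/-!
Writing `κ q = q·k`, applying `κ` twice gives `q = q·(k k^#)`, so freeness makes `k` a
`#`-cocycle, `k k^# = 1`. Solving `k = h (h^#)⁻¹` then makes `q·h` a fixed point of `κ`,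
which is surjectivity. For injectivity, if `p` and `p·h` are both fixed by `κ`, then
`p·h = κ(p·h) = p·h^#`, and freeness forces `h^# = h`.
-/

/-- The orbit space `Q/H` of a right action `act : Q → H → Q`. -/
def orbitQuot {Q H : Type*} (act : Q → H → Q) : Type _ :=
  Quot (fun q q' : Q => ∃ h : H, q' = act q h)

/-- The orbit space `Q_ℝ/H_ℝ`, where `Q_ℝ` is the fixed-point set of `κ` and
`H_ℝ = {h | h^# = h}`. -/
def fixedOrbitQuot {Q H : Type*} (act : Q → H → Q) (sharp : H → H) (κ : Q → Q) : Type _ :=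
  Quot (fun p p' : {q : Q // κ q = q} => ∃ h : H, sharp h = h ∧ p'.1 = act p.1 h)

/-- The natural map `Q_ℝ/H_ℝ → Q/H`. -/
def naturalMap {Q H : Type*} (act : Q → H → Q) (sharp : H → H) (κ : Q → Q) :
    fixedOrbitQuot act sharp κ → orbitQuot act :=
  Quot.lift (fun p => Quot.mk _ p.1)
    (fun _ _ hab => Quot.sound ⟨hab.choose, hab.choose_spec.2⟩)

section

variable {Q H : Type*} {act : Q → H → Q} {sharp : H → H} {κ : Q → Q}

theorem naturalMap_surjective (hfix : ∀ q : Q, ∃ h : H, κ (act q h) = act q h) :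
    Function.Surjective (naturalMap act sharp κ) := by
  rintro ⟨q⟩
  obtain ⟨h, hh⟩ := hfix q
  exact ⟨Quot.mk _ ⟨act q h, hh⟩, (Quot.sound ⟨h, rfl⟩).symm⟩

variable [Group H]

theorem exists_eq_act_of_eqvGen (hact_one : ∀ q : Q, act q 1 = q)
    (hact_mul : ∀ (q : Q) (h h' : H), act (act q h) h' = act q (h * h')) {x y : Q}
    (hxy : Relation.EqvGen (fun q q' : Q => ∃ h : H, q' = act q h) x y) :
    ∃ h : H, y = act x h := by
  induction hxy with
  | rel x y hxy => exact hxy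
  | refl x => exact ⟨1, (hact_one x).symm⟩
  | symm x y _ ih =>
    obtain ⟨h, rfl⟩ := ih
    exact ⟨h⁻¹, by rw [hact_mul, mul_inv_cancel, hact_one]⟩
  | trans x y z _ _ ihxy ihyz =>
    obtain ⟨h, rfl⟩ := ihxy
    obtain ⟨g, rfl⟩ := ihyz
    exact ⟨h * g, hact_mul x h g⟩

theorem eq_of_act_eq (hact_mul : ∀ (q : Q) (h h' : H), act (act q h) h' = act q (h * h'))
    (hfree : ∀ (q : Q) (h : H), act q h = q → h = 1) {q : Q} {a b : H}
    (hab : act q a = act q b) : a = b := by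
  have : act (act q a) (a⁻¹ * b) = act q a := by
    rw [hact_mul, mul_inv_cancel_left, hab]
  exact inv_mul_eq_one.mp (hfree _ _ this)

theorem mul_sharp_eq_one_of_kappa_eq_act
    (hact_mul : ∀ (q : Q) (h h' : H), act (act q h) h' = act q (h * h'))
    (hfree : ∀ (q : Q) (h : H), act q h = q → h = 1)
    (hκ_inv : ∀ q : Q, κ (κ q) = q)
    (hκ_act : ∀ (q : Q) (h : H), κ (act q h) = act (κ q) (sharp h))
    {q : Q} {k : H} (hk : κ q = act q k) : k * sharp k = 1 :=
  hfree q _ <| by rw [← hact_mul, ← hk, ← hκ_act, ← hk, hκ_inv]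

theorem exists_kappa_fixed_in_orbit
    (hact_mul : ∀ (q : Q) (h h' : H), act (act q h) h' = act q (h * h'))
    (hfree : ∀ (q : Q) (h : H), act q h = q → h = 1)
    (hκ_inv : ∀ q : Q, κ (κ q) = q)
    (hκ_act : ∀ (q : Q) (h : H), κ (act q h) = act (κ q) (sharp h))
    (hκ_orbit : ∀ q : Q, ∃ h : H, κ q = act q h)
    (hsolve : ∀ k : H, k * sharp k = 1 → ∃ h : H, k = h * (sharp h)⁻¹) (q : Q) :
    ∃ h : H, κ (act q h) = act q h := by
  obtain ⟨k, hk⟩ := hκ_orbit q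
  obtain ⟨h, rfl⟩ := hsolve k (mul_sharp_eq_one_of_kappa_eq_act hact_mul hfree hκ_inv hκ_act hk)
  exact ⟨h, by rw [hκ_act, hk, hact_mul, inv_mul_cancel_right]⟩

theorem sharp_eq_self_of_kappa_fixed
    (hact_mul : ∀ (q : Q) (h h' : H), act (act q h) h' = act q (h * h'))
    (hfree : ∀ (q : Q) (h : H), act q h = q → h = 1)
    (hκ_act : ∀ (q : Q) (h : H), κ (act q h) = act (κ q) (sharp h))
    {p : Q} {h : H} (hp : κ p = p) (hph : κ (act p h) = act p h) : sharp h = h :=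
  eq_of_act_eq hact_mul hfree <| by rw [← hph, hκ_act, hp]

theorem naturalMap_injective (hact_one : ∀ q : Q, act q 1 = q)
    (hact_mul : ∀ (q : Q) (h h' : H), act (act q h) h' = act q (h * h'))
    (hfree : ∀ (q : Q) (h : H), act q h = q → h = 1)
    (hκ_act : ∀ (q : Q) (h : H), κ (act q h) = act (κ q) (sharp h)) :
    Function.Injective (naturalMap act sharp κ) := by
  rintro ⟨p⟩ ⟨p'⟩ hpp'
  obtain ⟨h, hh⟩ := exists_eq_act_of_eqvGen hact_one hact_mul (Quot.eqvGen_exact hpp')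
  have hph : κ (act p.1 h) = act p.1 h := hh ▸ p'.2
  exact Quot.sound ⟨h, sharp_eq_self_of_kappa_fixed hact_mul hfree hκ_act p.2 hph, hh⟩

end

theorem statement3_general {Q H : Type*} [Group H]
    (sharp : H →* H)
    (act : Q → H → Q)
    (hact_one : ∀ q : Q, act q 1 = q)
    (hact_mul : ∀ (q : Q) (h h' : H), act (act q h) h' = act q (h * h'))
    (hfree : ∀ (q : Q) (h : H), act q h = q → h = 1)
    (κ : Q → Q)
    (hκ_inv : ∀ q : Q, κ (κ q) = q)
    (hκ_act : ∀ (q : Q) (h : H), κ (act q h) = act (κ q) (sharp h))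
    (hκ_orbit : ∀ q : Q, ∃ h : H, κ q = act q h)
    (hsolve : ∀ k : H, k * sharp k = 1 → ∃ h : H, k = h * (sharp h)⁻¹) :
    (∀ q : Q, ∃ h : H, κ (act q h) = act q h) ∧
    Function.Bijective (naturalMap act (⇑sharp) κ) := by
  have hfix := exists_kappa_fixed_in_orbit hact_mul hfree hκ_inv hκ_act hκ_orbit hsolve
  exact ⟨hfix, naturalMap_injective hact_one hact_mul hfree hκ_act,
    naturalMap_surjective hfix⟩

/-- Let `H` act freely on the right on `Q`, `#` an involutive automorphism of `H`, and
`κ : Q → Q` an involution with `κ(q·h) = κ(q)·h^#` preserving `H`-orbits.  If moreover every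
`k ∈ H` with `k·k^# = 1` is of the form `k = h·(h^#)⁻¹`, then every `H`-orbit in `Q` contains
a fixed point of `κ`, and the natural map `Q_ℝ/H_ℝ → Q/H` is a bijection. -/
theorem statement3 {Q H : Type*} [Group H]
    (sharp : H →* H) (hsharp : ∀ h : H, sharp (sharp h) = h)
    (act : Q → H → Q)
    (hact_one : ∀ q : Q, act q 1 = q)
    (hact_mul : ∀ (q : Q) (h h' : H), act (act q h) h' = act q (h * h'))
    (hfree : ∀ (q : Q) (h : H), act q h = q → h = 1)
    (κ : Q → Q)
    (hκ_inv : ∀ q : Q, κ (κ q) = q)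
    (hκ_act : ∀ (q : Q) (h : H), κ (act q h) = act (κ q) (sharp h))
    (hκ_orbit : ∀ q : Q, ∃ h : H, κ q = act q h)
    (hsolve : ∀ k : H, k * sharp k = 1 → ∃ h : H, k = h * (sharp h)⁻¹) :
    (∀ q : Q, ∃ h : H, κ (act q h) = act q h) ∧
    Function.Bijective (naturalMap act (⇑sharp) κ) :=
  statement3_general sharp act hact_one hact_mul hfree κ hκ_inv hκ_act hκ_orbit hsolve
end

section
/- There is a well-defined map κ : Q → Q given by κ(q) := q·h·(h^#)⁻¹ for any h ∈ H with q·h ∈ P (the value is independent of the choice of such h), and this map satisfies κ ∘ κ = id, κ(q·h') = κ(q)·(h')^# for all q ∈ Q and h' ∈ H, and its fixed-point set {q ∈ Q | κ(q) = q} equals P. -/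
/-!
For `q·h ∈ P` put `κ(q) := q·h·(h^#)⁻¹`. Two choices `h, h'` differ by `h⁻¹h'`, which moves a point
of `P` into `P` and hence is real; for a real `h⁻¹h'` the elements `h(h^#)⁻¹` and `h'(h'^#)⁻¹`
coincide, so `κ` is well defined. Since `κ(q)·h^# = q·h ∈ P`, the formula computes `κ(κ(q))` with
`h^#` in place of `h`, giving back `q`; equivariance is the same computation with `h'⁻¹h`. Finally
`κ(q) = q` forces `h = h^#` by freeness, so `q = (q·h)·h⁻¹ ∈ P`.
-/

theorem MonoidHom.mul_inv_map_eq_of_map_inv_mul_eq {H : Type*} [Group H] (f : H →* H)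
    {h h' : H} (hfix : f (h⁻¹ * h') = h⁻¹ * h') :
    h * (f h)⁻¹ = h' * (f h')⁻¹ := by
  rw [map_mul, map_inv] at hfix
  have hf : f h' = f h * h⁻¹ * h' := by
    rw [mul_assoc, ← hfix, mul_inv_cancel_left]
  rw [hf]
  group

namespace RealStructure

variable {Q H : Type*} [Group H] (sharp : H →* H) (act : Q → H → Q) (P : Set Q)

/-- The map `κ`, computed with an arbitrary `h` such that `q·h ∈ P`. -/
noncomputable def conj (q : Q) : Q :=
  let h := Classical.epsilon fun h => act q h ∈ P
  act q (h * (sharp h)⁻¹)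

variable {sharp act P}

theorem conj_eq_of_act_mem
    (hact_mul : ∀ (q : Q) (h h' : H), act (act q h) h' = act q (h * h'))
    (hP_real : ∀ p ∈ P, ∀ h : H, act p h ∈ P → sharp h = h)
    {q : Q} {h : H} (hq : act q h ∈ P) :
    conj sharp act P q = act q (h * (sharp h)⁻¹) := by
  set h₀ := Classical.epsilon fun h => act q h ∈ P
  have hq₀ : act q h₀ ∈ P := Classical.epsilon_spec (p := fun h => act q h ∈ P) ⟨h, hq⟩
  have hmem : act (act q h₀) (h₀⁻¹ * h) ∈ P := by
    rwa [hact_mul, mul_inv_cancel_left]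
  exact congrArg (act q) (sharp.mul_inv_map_eq_of_map_inv_mul_eq (hP_real _ hq₀ _ hmem))

theorem conj_conj (hsharp : ∀ h : H, sharp (sharp h) = h)
    (hact_one : ∀ q : Q, act q 1 = q)
    (hact_mul : ∀ (q : Q) (h h' : H), act (act q h) h' = act q (h * h'))
    (hP_meets : ∀ q : Q, ∃ h : H, act q h ∈ P)
    (hP_real : ∀ p ∈ P, ∀ h : H, act p h ∈ P → sharp h = h) (q : Q) :
    conj sharp act P (conj sharp act P q) = q := by
  obtain ⟨h, hq⟩ := hP_meets q
  have hκq := conj_eq_of_act_mem hact_mul hP_real hq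
  have hmem : act (conj sharp act P q) (sharp h) ∈ P := by
    rwa [hκq, hact_mul, inv_mul_cancel_right]
  rw [conj_eq_of_act_mem hact_mul hP_real hmem, hκq, hact_mul, hsharp,
    mul_assoc, inv_mul_cancel_left, mul_inv_cancel, hact_one]

theorem conj_act
    (hact_mul : ∀ (q : Q) (h h' : H), act (act q h) h' = act q (h * h'))
    (hP_meets : ∀ q : Q, ∃ h : H, act q h ∈ P)
    (hP_real : ∀ p ∈ P, ∀ h : H, act p h ∈ P → sharp h = h) (q : Q) (h' : H) :
    conj sharp act P (act q h') = act (conj sharp act P q) (sharp h') := by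
  obtain ⟨h, hq⟩ := hP_meets q
  have hmem : act (act q h') (h'⁻¹ * h) ∈ P := by
    rwa [hact_mul, mul_inv_cancel_left]
  rw [conj_eq_of_act_mem hact_mul hP_real hmem, conj_eq_of_act_mem hact_mul hP_real hq,
    hact_mul, hact_mul, map_mul, map_inv]
  congr 1
  group

theorem conj_eq_self_iff
    (hact_one : ∀ q : Q, act q 1 = q)
    (hact_mul : ∀ (q : Q) (h h' : H), act (act q h) h' = act q (h * h'))
    (hfree : ∀ (q : Q) (h : H), act q h = q → h = 1)
    (hP_stable : ∀ p ∈ P, ∀ lam : H, sharp lam = lam → act p lam ∈ P)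
    (hP_meets : ∀ q : Q, ∃ h : H, act q h ∈ P)
    (hP_real : ∀ p ∈ P, ∀ h : H, act p h ∈ P → sharp h = h) (q : Q) :
    conj sharp act P q = q ↔ q ∈ P := by
  constructor
  · intro hfix
    obtain ⟨h, hq⟩ := hP_meets q
    have hreal : sharp h = h := by
      have hone := hfree q _ ((conj_eq_of_act_mem hact_mul hP_real hq).symm.trans hfix)
      exact (mul_inv_eq_one.mp hone).symm
    have hmem : act (act q h) h⁻¹ ∈ P := hP_stable _ hq _ (by rw [map_inv, hreal])
    rwa [hact_mul, mul_inv_cancel, hact_one] at hmem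
  · intro hq
    rw [conj_eq_of_act_mem hact_mul hP_real (h := 1) (by rwa [hact_one]),
      map_one, inv_one, mul_one, hact_one]

end RealStructure

open RealStructure in
/-- Let `H` act freely on the right on `Q`, `#` an involutive automorphism of `H` with
fixed-point subgroup `H_ℝ`, and `P ⊆ Q` a subset stable under `H_ℝ`, meeting every `H`-orbit,
and such that any `h ∈ H` moving a point of `P` inside `P` lies in `H_ℝ`.  Then there is a
well-defined map `κ(q) := q·h·(h^#)⁻¹` (for any `h` with `q·h ∈ P`), which is an involution,
satisfies `κ(q·h') = κ(q)·(h')^#`, and whose fixed-point set is exactly `P`. -/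
theorem statement4 {Q H : Type*} [Group H]
    (sharp : H →* H) (hsharp : ∀ h : H, sharp (sharp h) = h)
    (act : Q → H → Q)
    (hact_one : ∀ q : Q, act q 1 = q)
    (hact_mul : ∀ (q : Q) (h h' : H), act (act q h) h' = act q (h * h'))
    (hfree : ∀ (q : Q) (h : H), act q h = q → h = 1)
    (P : Set Q)
    (hP_stable : ∀ p ∈ P, ∀ lam : H, sharp lam = lam → act p lam ∈ P)
    (hP_meets : ∀ q : Q, ∃ h : H, act q h ∈ P)
    (hP_real : ∀ p ∈ P, ∀ h : H, act p h ∈ P → sharp h = h) :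
    ∃ κ : Q → Q,
      (∀ (q : Q) (h : H), act q h ∈ P → κ q = act (act q h) (sharp h)⁻¹) ∧
      (∀ q : Q, κ (κ q) = q) ∧
      (∀ (q : Q) (h' : H), κ (act q h') = act (κ q) (sharp h')) ∧
      (∀ q : Q, κ q = q ↔ q ∈ P) :=
  ⟨conj sharp act P,
    fun _ _ hq => by rw [conj_eq_of_act_mem hact_mul hP_real hq, hact_mul],
    conj_conj hsharp hact_one hact_mul hP_meets hP_real,
    conj_act hact_mul hP_meets hP_real,
    conj_eq_self_iff hact_one hact_mul hfree hP_stable hP_meets hP_real⟩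
end
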